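/- arXiv:1804.10306 — 2 statements merged into one kernel-verified Lean document; each statement's English description precedes it below -/
import Mathlib

section
/- Let f : L²(ℝ², ℝ^{d_V}) → L²(ℝ², ℝ^{d_U}) be ℝ²-equivariant (f(R_{(γ,1)}Φ) = R_{(γ,1)}f(Φ) for all translations γ), where R_{(γ,θ)}Φ(x) = Φ(θ^{-1}(x − γ)) is the canonical SE(2)-representation. If additionally f(R_{(0,θ)}Φ)(0) = f(Φ)(0) for all rotations θ ∈ SO(2) and all Φ (with signal values at a point understood via a fixed equivariant choice of representative), then f is SE(2)-equivariant: f(R_{(γ,θ)}Φ) = R_{(γ,θ)}f(Φ) for all (γ,θ) ∈ SE(2). -/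
/-- Identify `ℝ² ≅ ℂ`, rotations with unit complex numbers `θ`, and let
`(R_{(γ,θ)}Φ)(x) = Φ(θ⁻¹(x − γ))` be the canonical `SE(2)`-action on signals
(formulated here at the level of pointwise-defined signals, as for continuous
signals or equivariantly chosen representatives). If `f` is translation
equivariant, `f(R_{(γ,1)}Φ) = R_{(γ,1)}f(Φ)`, and satisfies
`f(R_{(0,θ)}Φ)(0) = f(Φ)(0)` for all rotations `θ` and all signals `Φ`, then
`f` is `SE(2)`-equivariant: `f(R_{(γ,θ)}Φ) = R_{(γ,θ)}f(Φ)`. -/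
theorem stmt_10 {E F : Type*} (f : (ℂ → E) → (ℂ → F))
    (htrans : ∀ (γ : ℂ) (Φ : ℂ → E),
      f (fun x => Φ (x - γ)) = fun x => f Φ (x - γ))
    (hrot0 : ∀ θ : ℂ, ‖θ‖ = 1 → ∀ Φ : ℂ → E,
      f (fun x => Φ (θ⁻¹ * x)) 0 = f Φ 0) :
    ∀ (γ θ : ℂ), ‖θ‖ = 1 → ∀ Φ : ℂ → E,
      f (fun x => Φ (θ⁻¹ * (x - γ))) = fun x => f Φ (θ⁻¹ * (x - γ)) := by
  have key : ∀ θ : ℂ, ‖θ‖ = 1 → ∀ Φ : ℂ → E, ∀ y : ℂ,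
      f (fun x => Φ (θ⁻¹ * x)) y = f Φ (θ⁻¹ * y) := by
    intro θ hθ Φ y
    -- translate by -y to bring y to 0
    have h1 := congrFun (htrans (-y) (fun x => Φ (θ⁻¹ * x))) 0
    simp only [zero_sub, neg_neg, sub_neg_eq_add, zero_add] at h1
    -- h1 : f (fun x => Φ (θ⁻¹ * (x + y))) 0 = f (fun x => Φ (θ⁻¹ * x)) y
    have h2 := hrot0 θ hθ (fun z => Φ (z + θ⁻¹ * y))
    -- h2 : f (fun x => Φ (θ⁻¹ * x + θ⁻¹ * y)) 0 = f (fun z => Φ (z + θ⁻¹ * y)) 0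
    have h3 := congrFun (htrans (-(θ⁻¹ * y)) Φ) 0
    simp only [zero_sub, neg_neg, sub_neg_eq_add, zero_add] at h3
    -- h3 : f (fun x => Φ (x + θ⁻¹ * y)) 0 = f Φ (θ⁻¹ * y)
    have e : (fun x : ℂ => Φ (θ⁻¹ * (x + y))) = fun x => Φ (θ⁻¹ * x + θ⁻¹ * y) := by
      funext x; ring_nf
    rw [← h1, e, h2, h3]
  intro γ θ hθ Φ
  funext x
  have h1 := congrFun (htrans γ (fun x => Φ (θ⁻¹ * x))) x
  -- h1 : f (fun z => Φ (θ⁻¹ * (z - γ))) x = f (fun z => Φ (θ⁻¹ * z)) (x - γ)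
  rw [h1, key θ hθ Φ (x - γ)]
end

section
/- For all λ ∈ (0,1] and nonnegative integers a, b, the L² norm of the function Ψ_{L_λ^{(a,b)}}(p_x,p_y) = [(i/2λ)(sin λp_x − i sin λp_y)]^a [(i/2λ)(sin λp_x + i sin λp_y)]^b [1 − (1/2)(sin²(λp_x/2)+sin²(λp_y/2))]^{⌈4/λ²⌉} on [−π/λ, π/λ]² is bounded uniformly in λ: ‖Ψ_{L_λ^{(a,b)}}‖²_{L²} ≤ ∫_{ℝ²} ((|p_x|+|p_y|)/2)^{2(a+b)} exp(−(4/π²)(p_x²+p_y²)) dp_x dp_y < ∞. -/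
open MeasureTheory

private lemma aux_pow_bound (n : ℕ) (x y : ℝ) :
    ((|x| + |y|) / 2) ^ (2 * n) ≤ x ^ (2 * n) + y ^ (2 * n) := by
  have h1 : (|x| + |y|) / 2 ≤ max |x| |y| := by
    rcases le_total |x| |y| with h | h
    · rw [max_eq_right h]; linarith [abs_nonneg x]
    · rw [max_eq_left h]; linarith [abs_nonneg y]
  have h0 : (0:ℝ) ≤ (|x| + |y|) / 2 := by positivity
  have h2 : ((|x| + |y|) / 2) ^ (2 * n) ≤ (max |x| |y|) ^ (2 * n) :=
    pow_le_pow_left₀ h0 h1 _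
  have h3 : (max |x| |y|) ^ (2 * n) ≤ |x| ^ (2 * n) + |y| ^ (2 * n) := by
    rcases le_total |x| |y| with h | h
    · rw [max_eq_right h]; nlinarith [pow_nonneg (abs_nonneg x) (2 * n)]
    · rw [max_eq_left h]; nlinarith [pow_nonneg (abs_nonneg y) (2 * n)]
  calc _ ≤ _ := h2
    _ ≤ _ := h3
    _ = x ^ (2*n) + y ^ (2*n) := by
        rw [(even_two_mul n).pow_abs, (even_two_mul n).pow_abs]

private lemma aux_integrable (n : ℕ) {c : ℝ} (hc : 0 < c) :
    Integrable (fun p : ℝ × ℝ =>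
      ((|p.1| + |p.2|) / 2) ^ (2 * n) * Real.exp (-c * (p.1 ^ 2 + p.2 ^ 2))) := by
  have h1d : Integrable (fun x : ℝ => x ^ (2 * n) * Real.exp (-c * x ^ 2)) := by
    have h := integrable_rpow_mul_exp_neg_mul_sq hc (s := ((2 * n : ℕ) : ℝ))
      (lt_of_lt_of_le neg_one_lt_zero (Nat.cast_nonneg _))
    simp only [Real.rpow_natCast] at h
    exact h
  have hexp : Integrable (fun x : ℝ => Real.exp (-c * x ^ 2)) :=
    integrable_exp_neg_mul_sq hc
  have hG : Integrable (fun p : ℝ × ℝ =>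
      (p.1 ^ (2 * n) * Real.exp (-c * p.1 ^ 2)) * Real.exp (-c * p.2 ^ 2) +
      Real.exp (-c * p.1 ^ 2) * (p.2 ^ (2 * n) * Real.exp (-c * p.2 ^ 2))) := by
    have hA := h1d.mul_prod hexp
    have hB := hexp.mul_prod h1d
    rw [← Measure.volume_eq_prod] at hA hB
    exact hA.add hB
  refine hG.mono' ?_ ?_
  · apply Continuous.aestronglyMeasurable
    fun_prop
  · filter_upwards with p
    have hb := aux_pow_bound n p.1 p.2
    have he : Real.exp (-c * (p.1 ^ 2 + p.2 ^ 2))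
        = Real.exp (-c * p.1 ^ 2) * Real.exp (-c * p.2 ^ 2) := by
      rw [← Real.exp_add]; ring_nf
    have h0 : (0:ℝ) ≤ ((|p.1| + |p.2|) / 2) ^ (2 * n) * Real.exp (-c * (p.1^2 + p.2^2)) := by
      positivity
    rw [Real.norm_of_nonneg h0, he]
    have hep : (0:ℝ) < Real.exp (-c * p.1 ^ 2) * Real.exp (-c * p.2 ^ 2) := by positivity
    calc ((|p.1| + |p.2|) / 2) ^ (2 * n) * (Real.exp (-c * p.1^2) * Real.exp (-c * p.2^2))
        ≤ (p.1 ^ (2*n) + p.2 ^ (2*n)) * (Real.exp (-c * p.1^2) * Real.exp (-c * p.2^2)) :=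
          mul_le_mul_of_nonneg_right hb hep.le
      _ = _ := by ring

private lemma aux_sin_sq_lb {t : ℝ} (ht : |t| ≤ Real.pi / 2) :
    (2 / Real.pi) ^ 2 * t ^ 2 ≤ Real.sin t ^ 2 := by
  have h1 : 2 / Real.pi * |t| ≤ Real.sin |t| :=
    Real.mul_le_sin (abs_nonneg t) ht
  have h0 : (0:ℝ) ≤ 2 / Real.pi * |t| := by positivity
  have h2 : (2 / Real.pi * |t|) ^ 2 ≤ Real.sin |t| ^ 2 := by
    have := pow_le_pow_left₀ h0 h1 2
    exact this
  have h3 : Real.sin |t| ^ 2 = Real.sin t ^ 2 := by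
    rcases abs_choice t with h | h
    · rw [h]
    · rw [h, Real.sin_neg, neg_sq]
  calc (2 / Real.pi) ^ 2 * t ^ 2 = (2 / Real.pi * |t|) ^ 2 := by
        rw [mul_pow, sq_abs]
    _ ≤ Real.sin |t| ^ 2 := h2
    _ = _ := h3

set_option maxHeartbeats 1000000 in
/-- Uniform `L²` bound on the Fourier multiplier of the discretized smoothed
derivative operator: for all `λ ∈ (0,1]` and nonnegative integers `a, b`, the
squared `L²([−π/λ,π/λ]²)` norm of
`Ψ_{L_λ^{(a,b)}}(p) = [(i/2λ)(sin λp_x − i sin λp_y)]^a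
[(i/2λ)(sin λp_x + i sin λp_y)]^b
[1 − (1/2)(sin²(λp_x/2)+sin²(λp_y/2))]^{⌈4/λ²⌉}` is bounded, uniformly in `λ`,
by the finite integral
`∫_{ℝ²} ((|p_x|+|p_y|)/2)^{2(a+b)} exp(−(4/π²)(p_x²+p_y²)) dp < ∞`. -/
theorem stmt_16 (a b : ℕ) (lam : ℝ) (hlam₀ : 0 < lam) (hlam₁ : lam ≤ 1) :
    (∫ p : ℝ × ℝ in
        Set.Icc (-(Real.pi / lam)) (Real.pi / lam) ×ˢ
          Set.Icc (-(Real.pi / lam)) (Real.pi / lam),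
        ‖(Complex.I / (2 * (lam : ℂ)) *
              (((Real.sin (lam * p.1) : ℝ) : ℂ) -
                Complex.I * ((Real.sin (lam * p.2) : ℝ) : ℂ))) ^ a *
            (Complex.I / (2 * (lam : ℂ)) *
              (((Real.sin (lam * p.1) : ℝ) : ℂ) +
                Complex.I * ((Real.sin (lam * p.2) : ℝ) : ℂ))) ^ b *
            ((1 : ℂ) - ((( (1 : ℝ) / 2) *
                (Real.sin (lam * p.1 / 2) ^ 2 + Real.sin (lam * p.2 / 2) ^ 2) : ℝ) : ℂ))
              ^ (⌈(4 : ℝ) / lam ^ 2⌉₊)‖ ^ 2)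
      ≤ (∫ p : ℝ × ℝ,
          ((|p.1| + |p.2|) / 2) ^ (2 * (a + b)) *
            Real.exp (-(4 / Real.pi ^ 2) * (p.1 ^ 2 + p.2 ^ 2))) ∧
    Integrable (fun p : ℝ × ℝ =>
      ((|p.1| + |p.2|) / 2) ^ (2 * (a + b)) *
        Real.exp (-(4 / Real.pi ^ 2) * (p.1 ^ 2 + p.2 ^ 2))) := by
  have hπ : (0:ℝ) < Real.pi := Real.pi_pos
  have hcpos : (0:ℝ) < 4 / Real.pi ^ 2 := by positivity
  have hint := aux_integrable (a + b) hcpos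
  refine ⟨?_, hint⟩
  set N : ℕ := ⌈(4 : ℝ) / lam ^ 2⌉₊ with hN
  set S : Set (ℝ × ℝ) := Set.Icc (-(Real.pi / lam)) (Real.pi / lam) ×ˢ
    Set.Icc (-(Real.pi / lam)) (Real.pi / lam) with hS
  set f : ℝ × ℝ → ℝ := fun p =>
    ‖(Complex.I / (2 * (lam : ℂ)) *
          (((Real.sin (lam * p.1) : ℝ) : ℂ) -
            Complex.I * ((Real.sin (lam * p.2) : ℝ) : ℂ))) ^ a *
        (Complex.I / (2 * (lam : ℂ)) *
          (((Real.sin (lam * p.1) : ℝ) : ℂ) +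
            Complex.I * ((Real.sin (lam * p.2) : ℝ) : ℂ))) ^ b *
        ((1 : ℂ) - ((( (1 : ℝ) / 2) *
            (Real.sin (lam * p.1 / 2) ^ 2 + Real.sin (lam * p.2 / 2) ^ 2) : ℝ) : ℂ)) ^ N‖ ^ 2
    with hf
  set g : ℝ × ℝ → ℝ := fun p =>
    ((|p.1| + |p.2|) / 2) ^ (2 * (a + b)) *
      Real.exp (-(4 / Real.pi ^ 2) * (p.1 ^ 2 + p.2 ^ 2)) with hg
  have hSm : MeasurableSet S := (measurableSet_Icc).prod measurableSet_Icc
  have hfS : IntegrableOn f S := by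
    have hc : Continuous f := by fun_prop
    exact hc.continuousOn.integrableOn_compact (isCompact_Icc.prod isCompact_Icc)
  -- pointwise bound on S
  have hpt : ∀ p ∈ S, f p ≤ g p := by
    rintro ⟨x, y⟩ ⟨hx, hy⟩
    simp only [Set.mem_Icc] at hx hy
    have hxa : |x| ≤ Real.pi / lam := abs_le.2 hx
    have hya : |y| ≤ Real.pi / lam := abs_le.2 hy
    set M : ℝ := (|x| + |y|) / 2 with hM
    have hM0 : 0 ≤ M := by positivity
    set s : ℝ := (1 / 2) * (Real.sin (lam * x / 2) ^ 2 + Real.sin (lam * y / 2) ^ 2) with hs'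
    have hs0 : 0 ≤ s := by positivity
    have hs1 : s ≤ 1 := by
      have h1 := Real.sin_sq_le_one (lam * x / 2)
      have h2 := Real.sin_sq_le_one (lam * y / 2)
      simp only [hs']; nlinarith
    -- norm of the complex factors
    have hznorm : ‖Complex.I / (2 * (lam : ℂ))‖ = 1 / (2 * lam) := by
      rw [norm_div, Complex.norm_I]
      congr 1
      have : (2 * (lam : ℂ)) = ((2 * lam : ℝ) : ℂ) := by push_cast; ring
      rw [this, Complex.norm_real, Real.norm_eq_abs, abs_of_pos (by linarith)]
    have hsinx : |Real.sin (lam * x)| ≤ lam * |x| := by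
      calc |Real.sin (lam * x)| ≤ |lam * x| := Real.abs_sin_le_abs
        _ = lam * |x| := by rw [abs_mul, abs_of_pos hlam₀]
    have hsiny : |Real.sin (lam * y)| ≤ lam * |y| := by
      calc |Real.sin (lam * y)| ≤ |lam * y| := Real.abs_sin_le_abs
        _ = lam * |y| := by rw [abs_mul, abs_of_pos hlam₀]
    have hz₁ : ‖Complex.I / (2 * (lam : ℂ)) *
        (((Real.sin (lam * x) : ℝ) : ℂ) - Complex.I * ((Real.sin (lam * y) : ℝ) : ℂ))‖ ≤ M := by
      rw [norm_mul, hznorm]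
      have h1 : ‖(((Real.sin (lam * x) : ℝ) : ℂ) - Complex.I * ((Real.sin (lam * y) : ℝ) : ℂ))‖
          ≤ lam * |x| + lam * |y| := by
        calc _ ≤ ‖(((Real.sin (lam * x) : ℝ) : ℂ))‖ +
              ‖Complex.I * ((Real.sin (lam * y) : ℝ) : ℂ)‖ := norm_sub_le _ _
          _ = |Real.sin (lam * x)| + |Real.sin (lam * y)| := by
              rw [norm_mul, Complex.norm_I, one_mul, Complex.norm_real, Complex.norm_real,
                Real.norm_eq_abs, Real.norm_eq_abs]
          _ ≤ lam * |x| + lam * |y| := add_le_add hsinx hsiny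
      calc 1 / (2 * lam) * ‖_‖ ≤ 1 / (2 * lam) * (lam * |x| + lam * |y|) := by
            apply mul_le_mul_of_nonneg_left h1 (by positivity)
        _ = M := by field_simp [hM]; ring
    have hz₂ : ‖Complex.I / (2 * (lam : ℂ)) *
        (((Real.sin (lam * x) : ℝ) : ℂ) + Complex.I * ((Real.sin (lam * y) : ℝ) : ℂ))‖ ≤ M := by
      rw [norm_mul, hznorm]
      have h1 : ‖(((Real.sin (lam * x) : ℝ) : ℂ) + Complex.I * ((Real.sin (lam * y) : ℝ) : ℂ))‖
          ≤ lam * |x| + lam * |y| := by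
        calc _ ≤ ‖(((Real.sin (lam * x) : ℝ) : ℂ))‖ +
              ‖Complex.I * ((Real.sin (lam * y) : ℝ) : ℂ)‖ := norm_add_le _ _
          _ = |Real.sin (lam * x)| + |Real.sin (lam * y)| := by
              rw [norm_mul, Complex.norm_I, one_mul, Complex.norm_real, Complex.norm_real,
                Real.norm_eq_abs, Real.norm_eq_abs]
          _ ≤ lam * |x| + lam * |y| := add_le_add hsinx hsiny
      calc 1 / (2 * lam) * ‖_‖ ≤ 1 / (2 * lam) * (lam * |x| + lam * |y|) := by
            apply mul_le_mul_of_nonneg_left h1 (by positivity)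
        _ = M := by field_simp [hM]; ring
    have hwnorm : ‖(1 : ℂ) - ((s : ℝ) : ℂ)‖ = 1 - s := by
      have : (1 : ℂ) - ((s : ℝ) : ℂ) = (((1 - s : ℝ)) : ℂ) := by push_cast; ring
      rw [this, Complex.norm_real, Real.norm_eq_abs, abs_of_nonneg (by linarith)]
    -- norm of Ψ
    have hΨ : f (x, y) ≤ M ^ (2 * (a + b)) * (1 - s) ^ (2 * N) := by
      have hfval : f (x, y) = (‖Complex.I / (2 * (lam : ℂ)) *
          (((Real.sin (lam * x) : ℝ) : ℂ) - Complex.I * ((Real.sin (lam * y) : ℝ) : ℂ))‖ ^ a *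
          ‖Complex.I / (2 * (lam : ℂ)) *
          (((Real.sin (lam * x) : ℝ) : ℂ) + Complex.I * ((Real.sin (lam * y) : ℝ) : ℂ))‖ ^ b *
          (1 - s) ^ N) ^ 2 := by
        simp only [hf]
        rw [norm_mul, norm_mul, norm_pow, norm_pow, norm_pow, hwnorm]
      rw [hfval]
      have hb1 : ‖Complex.I / (2 * (lam : ℂ)) *
          (((Real.sin (lam * x) : ℝ) : ℂ) - Complex.I * ((Real.sin (lam * y) : ℝ) : ℂ))‖ ^ a *
          ‖Complex.I / (2 * (lam : ℂ)) *
          (((Real.sin (lam * x) : ℝ) : ℂ) + Complex.I * ((Real.sin (lam * y) : ℝ) : ℂ))‖ ^ b *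
          (1 - s) ^ N ≤ M ^ a * M ^ b * (1 - s) ^ N := by
        have h1s : 0 ≤ (1 - s) ^ N := pow_nonneg (by linarith) N
        apply mul_le_mul_of_nonneg_right _ h1s
        exact mul_le_mul (pow_le_pow_left₀ (norm_nonneg _) hz₁ a)
          (pow_le_pow_left₀ (norm_nonneg _) hz₂ b) (pow_nonneg (norm_nonneg _) b)
          (pow_nonneg hM0 a)
      have hb0 : 0 ≤ ‖Complex.I / (2 * (lam : ℂ)) *
          (((Real.sin (lam * x) : ℝ) : ℂ) - Complex.I * ((Real.sin (lam * y) : ℝ) : ℂ))‖ ^ a *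
          ‖Complex.I / (2 * (lam : ℂ)) *
          (((Real.sin (lam * x) : ℝ) : ℂ) + Complex.I * ((Real.sin (lam * y) : ℝ) : ℂ))‖ ^ b *
          (1 - s) ^ N := by
        have h1s : 0 ≤ (1 - s) ^ N := pow_nonneg (by linarith) N
        positivity
      calc _ ≤ (M ^ a * M ^ b * (1 - s) ^ N) ^ 2 := pow_le_pow_left₀ hb0 hb1 2
        _ = M ^ (2 * (a + b)) * (1 - s) ^ (2 * N) := by
            rw [← pow_add, mul_pow, ← pow_mul, ← pow_mul]
            ring_nf
    -- bound (1-s)^(2N) by the Gaussian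
    have hkey : 4 / Real.pi ^ 2 * (x ^ 2 + y ^ 2) ≤ 2 * N * s := by
      have hNlb : 4 / lam ^ 2 ≤ (N : ℝ) := Nat.le_ceil _
      have hxt : |lam * x / 2| ≤ Real.pi / 2 := by
        rw [abs_div, abs_mul, abs_of_pos hlam₀, abs_of_pos (by norm_num : (0:ℝ) < 2)]
        rw [div_le_div_iff_of_pos_right (by norm_num : (0:ℝ) < 2)]
        calc lam * |x| ≤ lam * (Real.pi / lam) := by
              exact mul_le_mul_of_nonneg_left hxa hlam₀.le
          _ = Real.pi := by field_simp
      have hyt : |lam * y / 2| ≤ Real.pi / 2 := by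
        rw [abs_div, abs_mul, abs_of_pos hlam₀, abs_of_pos (by norm_num : (0:ℝ) < 2)]
        rw [div_le_div_iff_of_pos_right (by norm_num : (0:ℝ) < 2)]
        calc lam * |y| ≤ lam * (Real.pi / lam) := by
              exact mul_le_mul_of_nonneg_left hya hlam₀.le
          _ = Real.pi := by field_simp
      have hx2 := aux_sin_sq_lb hxt
      have hy2 := aux_sin_sq_lb hyt
      have hslb : lam ^ 2 * (x ^ 2 + y ^ 2) / (2 * Real.pi ^ 2) ≤ s := by
        have e1 : (2 / Real.pi) ^ 2 * (lam * x / 2) ^ 2 = lam ^ 2 * x ^ 2 / Real.pi ^ 2 := by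
          field_simp
        have e2 : (2 / Real.pi) ^ 2 * (lam * y / 2) ^ 2 = lam ^ 2 * y ^ 2 / Real.pi ^ 2 := by
          field_simp
        rw [e1] at hx2; rw [e2] at hy2
        have e3 : lam ^ 2 * (x ^ 2 + y ^ 2) / (2 * Real.pi ^ 2)
            = (1/2) * (lam ^ 2 * x ^ 2 / Real.pi ^ 2 + lam ^ 2 * y ^ 2 / Real.pi ^ 2) := by
          field_simp
        rw [e3, hs']
        linarith
      have hu : (4:ℝ) ≤ (N:ℝ) * lam ^ 2 := by
        rw [div_le_iff₀ (by positivity)] at hNlb; linarith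
      have hsl2 : lam ^ 2 * (x ^ 2 + y ^ 2) ≤ 2 * Real.pi ^ 2 * s := by
        rw [div_le_iff₀ (by positivity)] at hslb; linarith
      rw [div_mul_eq_mul_div, div_le_iff₀ (by positivity : (0:ℝ) < Real.pi ^ 2)]
      have hr : (0:ℝ) ≤ x ^ 2 + y ^ 2 := by positivity
      have hN0 : (0:ℝ) ≤ (N:ℝ) := Nat.cast_nonneg _
      nlinarith [mul_le_mul_of_nonneg_right hu hr, mul_le_mul_of_nonneg_left hsl2 hN0]
    have hgauss : (1 - s) ^ (2 * N) ≤ Real.exp (-(4 / Real.pi ^ 2) * (x ^ 2 + y ^ 2)) := by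
      have h1 : 1 - s ≤ Real.exp (-s) := by
        have := Real.add_one_le_exp (-s); linarith
      have h2 : (1 - s) ^ (2 * N) ≤ Real.exp (-s) ^ (2 * N) :=
        pow_le_pow_left₀ (by linarith) h1 _
      have h3 : Real.exp (-s) ^ (2 * N) = Real.exp (-(2 * N * s)) := by
        rw [← Real.exp_nat_mul]; congr 1; push_cast; ring
      rw [h3] at h2
      calc (1 - s) ^ (2 * N) ≤ Real.exp (-(2 * N * s)) := h2
        _ ≤ Real.exp (-(4 / Real.pi ^ 2) * (x ^ 2 + y ^ 2)) := by
            apply Real.exp_le_exp.2; nlinarith [hkey]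
    calc f (x, y) ≤ M ^ (2 * (a + b)) * (1 - s) ^ (2 * N) := hΨ
      _ ≤ M ^ (2 * (a + b)) * Real.exp (-(4 / Real.pi ^ 2) * (x ^ 2 + y ^ 2)) :=
          mul_le_mul_of_nonneg_left hgauss (pow_nonneg hM0 _)
      _ = g (x, y) := rfl
  calc ∫ p in S, f p ≤ ∫ p in S, g p :=
        setIntegral_mono_on hfS hint.integrableOn hSm hpt
    _ ≤ ∫ p, g p := setIntegral_le_integral hint
        (Filter.Eventually.of_forall fun p => by positivity)
end
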